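/- Define h : ℝ × ℝ → ℂ by h(t, a) = e^{a}·(tanh(t) + i·sech(t)), where sech(t) = 1/cosh(t). Then for all t₁, t₂, a₁, a₂ ∈ ℝ the points h(t₁, a₁) and h(t₂, a₂) have strictly positive imaginary part, and the hyperbolic distance between them in the upper half-plane satisfies cosh( dist(h(t₁,a₁), h(t₂,a₂)) ) = cosh(t₁)·cosh(t₂)·cosh(a₁ − a₂) − sinh(t₁)·sinh(t₂). -/

import Mathlib

/-!
Every `h(t, a)` has modulus `e^a`, since `tanh² + sech² = 1`, so the law of cosines
`|z - w|² = |z|² + |w|² - 2 Re (z w̄)` computes `|h₁ - h₂|²` from `Re (h₁ h̄₂)` alone.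
With `e^{2a₁} + e^{2a₂} = 2 e^{a₁ + a₂} cosh (a₁ - a₂)`, the half-plane formula
`cosh d = 1 + |z - w|² / (2 Im z Im w)` then collapses to the claimed expression.
-/

open Complex

/-- The map `h(t, a) = e^a (tanh t + i sech t)` from the doubly warped model
`[0,∞) ×_{cosh t} ℝ` of the hyperbolic plane into `ℂ`. -/
noncomputable def warpedModelMap (t a : ℝ) : ℂ :=
  (Real.exp a : ℝ) * ((Real.tanh t : ℂ) + Complex.I * ((Real.cosh t : ℂ))⁻¹)

open ComplexConjugate

lemma Real.exp_sq_add_exp_sq (x y : ℝ) :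
    Real.exp x ^ 2 + Real.exp y ^ 2 = 2 * Real.exp x * Real.exp y * Real.cosh (x - y) := by
  rw [Real.cosh_eq, Real.exp_neg, Real.exp_sub]
  field_simp

lemma warpedModelMap_re (t a : ℝ) :
    (warpedModelMap t a).re = Real.exp a * Real.sinh t / Real.cosh t := by
  simp only [warpedModelMap, ← ofReal_inv, add_re, ofReal_re, mul_re, I_re, I_im, ofReal_im]
  rw [Real.tanh_eq_sinh_div_cosh]
  ring

lemma warpedModelMap_im (t a : ℝ) : (warpedModelMap t a).im = Real.exp a / Real.cosh t := by
  simp only [warpedModelMap, ← ofReal_inv, add_im, ofReal_im, mul_im, I_re, I_im, ofReal_re]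
  ring

lemma warpedModelMap_im_pos (t a : ℝ) : 0 < (warpedModelMap t a).im := by
  rw [warpedModelMap_im]
  exact div_pos (Real.exp_pos a) (Real.cosh_pos t)

lemma normSq_warpedModelMap (t a : ℝ) : normSq (warpedModelMap t a) = Real.exp a ^ 2 := by
  have hc := (Real.cosh_pos t).ne'
  rw [normSq_apply, warpedModelMap_re, warpedModelMap_im]
  field_simp
  linear_combination -Real.cosh_sq_sub_sinh_sq t

lemma re_warpedModelMap_mul_conj (t₁ t₂ a₁ a₂ : ℝ) :
    (warpedModelMap t₁ a₁ * conj (warpedModelMap t₂ a₂)).re =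
      Real.exp a₁ * Real.exp a₂ * (Real.sinh t₁ * Real.sinh t₂ + 1) /
        (Real.cosh t₁ * Real.cosh t₂) := by
  rw [mul_re, conj_re, conj_im, warpedModelMap_re, warpedModelMap_re, warpedModelMap_im,
    warpedModelMap_im]
  field_simp
  ring

lemma dist_warpedModelMap_sq (t₁ t₂ a₁ a₂ : ℝ) :
    dist (warpedModelMap t₁ a₁) (warpedModelMap t₂ a₂) ^ 2 =
      2 * Real.exp a₁ * Real.exp a₂ * (Real.cosh (a₁ - a₂) -
        (Real.sinh t₁ * Real.sinh t₂ + 1) / (Real.cosh t₁ * Real.cosh t₂)) := by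
  rw [dist_eq, Complex.sq_norm, normSq_sub, normSq_warpedModelMap, normSq_warpedModelMap,
    re_warpedModelMap_mul_conj, Real.exp_sq_add_exp_sq]
  ring

/-- **Isometry of the warped model into the hyperbolic plane.**
For all `t₁, t₂, a₁, a₂ ∈ ℝ`, the points `h(t₁,a₁)` and `h(t₂,a₂)` lie in the upper
half-plane, and their hyperbolic distance satisfies
`cosh(dist) = cosh t₁ · cosh t₂ · cosh (a₁ − a₂) − sinh t₁ · sinh t₂`. -/
theorem warpedModelMap_cosh_dist (t₁ t₂ a₁ a₂ : ℝ) :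
    ∃ (h₁ : 0 < (warpedModelMap t₁ a₁).im) (h₂ : 0 < (warpedModelMap t₂ a₂).im),
      Real.cosh (dist (UpperHalfPlane.mk (warpedModelMap t₁ a₁) h₁)
          (UpperHalfPlane.mk (warpedModelMap t₂ a₂) h₂)) =
        Real.cosh t₁ * Real.cosh t₂ * Real.cosh (a₁ - a₂) -
          Real.sinh t₁ * Real.sinh t₂ := by
  refine ⟨warpedModelMap_im_pos t₁ a₁, warpedModelMap_im_pos t₂ a₂, ?_⟩
  have hc₁ := (Real.cosh_pos t₁).ne'
  have hc₂ := (Real.cosh_pos t₂).ne'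
  rw [UpperHalfPlane.cosh_dist, UpperHalfPlane.coe_mk, UpperHalfPlane.coe_mk,
    UpperHalfPlane.mk_im, UpperHalfPlane.mk_im, dist_warpedModelMap_sq, warpedModelMap_im,
    warpedModelMap_im]
  field_simp
  ring
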